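/- arXiv:1808.10060 — 9 statements merged into one kernel-verified Lean document; each statement's English description precedes it below -/
import Mathlib

section
/- Let R be a commutative ring and a,b,c,d ∈ R. For u,x,y ∈ R define the 3×3 matrix N(u,x,y) = [[u, -ady, -adx - bdy], [x, u - bx - cy, -cx - dy], [y, ax, u - cy]]. Then for all (u₁,x₁,y₁) and (u₂,x₂,y₂), N(u₁,x₁,y₁) * N(u₂,x₂,y₂) = N(u₂,x₂,y₂) * N(u₁,x₁,y₁). -/
theorem stmt_2 {R : Type*} [CommRing R] (a b c d : R) (u₁ x₁ y₁ u₂ x₂ y₂ : R) :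
    (!![u₁, -a * d * y₁, -a * d * x₁ - b * d * y₁;
        x₁, u₁ - b * x₁ - c * y₁, -c * x₁ - d * y₁;
        y₁, a * x₁, u₁ - c * y₁] : Matrix (Fin 3) (Fin 3) R) *
      !![u₂, -a * d * y₂, -a * d * x₂ - b * d * y₂;
         x₂, u₂ - b * x₂ - c * y₂, -c * x₂ - d * y₂;
         y₂, a * x₂, u₂ - c * y₂] =
    !![u₂, -a * d * y₂, -a * d * x₂ - b * d * y₂;
       x₂, u₂ - b * x₂ - c * y₂, -c * x₂ - d * y₂;
       y₂, a * x₂, u₂ - c * y₂] *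
      !![u₁, -a * d * y₁, -a * d * x₁ - b * d * y₁;
         x₁, u₁ - b * x₁ - c * y₁, -c * x₁ - d * y₁;
         y₁, a * x₁, u₁ - c * y₁] := by
  ext i j
  fin_cases i <;> fin_cases j <;>
    simp [Matrix.mul_apply, Fin.sum_univ_succ] <;> ring
end

section
/- Let R be a commutative ring and a,b,c,d ∈ R. With N(u,x,y) = [[u, -ady, -adx - bdy], [x, u - bx - cy, -cx - dy], [y, ax, u - cy]], the product N(u₁,x₁,y₁)·N(u₂,x₂,y₂) equals N(u₃,x₃,y₃) where u₃, x₃, y₃ are the entries of the first column of the product matrix; i.e. the matrices of this shape are closed under multiplication. -/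
/-- The 3×3 arithmetic matrix attached to the binary cubic form `(a, b, c, d)`. -/
def cubicArithMatrix {R : Type*} [CommRing R] (a b c d u x y : R) :
    Matrix (Fin 3) (Fin 3) R :=
  !![u, -a * d * y, -a * d * x - b * d * y;
     x, u - b * x - c * y, -c * x - d * y;
     y, a * x, u - c * y]

theorem stmt_3 {R : Type*} [CommRing R] (a b c d : R) (u₁ x₁ y₁ u₂ x₂ y₂ : R) :
    ∃ u₃ x₃ y₃ : R,
      cubicArithMatrix a b c d u₁ x₁ y₁ * cubicArithMatrix a b c d u₂ x₂ y₂ =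
        cubicArithMatrix a b c d u₃ x₃ y₃ ∧
      u₃ = (cubicArithMatrix a b c d u₁ x₁ y₁ * cubicArithMatrix a b c d u₂ x₂ y₂) 0 0 ∧
      x₃ = (cubicArithMatrix a b c d u₁ x₁ y₁ * cubicArithMatrix a b c d u₂ x₂ y₂) 1 0 ∧
      y₃ = (cubicArithMatrix a b c d u₁ x₁ y₁ * cubicArithMatrix a b c d u₂ x₂ y₂) 2 0 := by

  refine ⟨u₁ * u₂ + (-a * d * y₁) * x₂ + (-a * d * x₁ - b * d * y₁) * y₂,
    x₁ * u₂ + (u₁ - b * x₁ - c * y₁) * x₂ + (-c * x₁ - d * y₁) * y₂,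
    y₁ * u₂ + a * x₁ * x₂ + (u₁ - c * y₁) * y₂, ?_, ?_, ?_, ?_⟩
  · ext i j
    fin_cases i <;> fin_cases j <;>
      simp [cubicArithMatrix, Matrix.mul_apply, Fin.sum_univ_three] <;> ring
  all_goals
    simp [cubicArithMatrix, Matrix.mul_apply, Fin.sum_univ_three]
end

section
/- Let R be a commutative ring and a,b,c,d,e ∈ R. For u,x,y,z ∈ R define the 4×4 matrix N(u,x,y,z) = [[u, -aez, -e(ay+bz), -e(ax+by+cz)], [x, u-bx-cy-dz, -cx-dy-ez, -dx-ey], [y, ax, u-cy-dz, -dy-ez], [z, ay, ax+by, u-dz]]. Then any two matrices of this form commute: N(u₁,x₁,y₁,z₁)·N(u₂,x₂,y₂,z₂) = N(u₂,x₂,y₂,z₂)·N(u₁,x₁,y₁,z₁). -/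
/-- The 4×4 arithmetic matrix attached to the binary quartic form `(a, b, c, d, e)`. -/
def quarticArithMatrix {R : Type*} [CommRing R] (a b c d e u x y z : R) :
    Matrix (Fin 4) (Fin 4) R :=
  !![u, -a * e * z, -e * (a * y + b * z), -e * (a * x + b * y + c * z);
     x, u - b * x - c * y - d * z, -c * x - d * y - e * z, -d * x - e * y;
     y, a * x, u - c * y - d * z, -d * y - e * z;
     z, a * y, a * x + b * y, u - d * z]

theorem stmt_5 {R : Type*} [CommRing R] (a b c d e : R)
    (u₁ x₁ y₁ z₁ u₂ x₂ y₂ z₂ : R) :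
    quarticArithMatrix a b c d e u₁ x₁ y₁ z₁ * quarticArithMatrix a b c d e u₂ x₂ y₂ z₂ =
      quarticArithMatrix a b c d e u₂ x₂ y₂ z₂ * quarticArithMatrix a b c d e u₁ x₁ y₁ z₁ := by
  unfold quarticArithMatrix
  ext i j
  fin_cases i <;> fin_cases j <;>
    simp [Matrix.mul_apply, Fin.sum_univ_succ] <;> ring
end

section
/- Let R be a commutative ring and a,b,c,d,e ∈ R, and let N(u,x,y,z) be the 4×4 arithmetic matrix for the quartic form (a,b,c,d,e). Define t = 4u - bx - 2cy - 3dz and G(x,y,z) = (3b²-8ac)x² + (4bc-24ad)xy + (4c²-8bd-16ae)y² + (2bd-32ae)xz + (4cd-24be)yz + (3d²-8ce)z². Then there exist polynomials H(x,y,z) (homogeneous cubic) and F(x,y,z) (homogeneous quartic) in ℤ[a,b,c,d,e][x,y,z] such that 256·det N(u,x,y,z) = t⁴ - 2G(x,y,z)t² - 8H(x,y,z)t + F(x,y,z). -/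
set_option maxHeartbeats 4000000
set_option maxRecDepth 20000

open MvPolynomial in
noncomputable def trm (n : ℤ) (i0 i1 i2 i3 i4 p q r : ℕ) :
    MvPolynomial (Fin 3) (MvPolynomial (Fin 5) ℤ) :=
  C (C n * X 0 ^ i0 * X 1 ^ i1 * X 2 ^ i2 * X 3 ^ i3 * X 4 ^ i4) *
    (X 0 ^ p * X 1 ^ q * X 2 ^ r)

open MvPolynomial in
noncomputable def Hpoly : MvPolynomial (Fin 3) (MvPolynomial (Fin 5) ℤ) :=
    trm (-1) 0 0 0 3 0 0 0 3 +
    trm (4) 0 0 1 1 1 0 0 3 +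
    trm (-2) 0 0 1 2 0 0 1 2 +
    trm (8) 0 0 2 0 1 0 1 2 +
    trm (-8) 0 1 0 0 2 0 0 3 +
    trm (-4) 0 1 0 1 1 0 1 2 +
    trm (-4) 0 1 0 2 0 0 2 1 +
    trm (-1) 0 1 0 2 0 1 0 2 +
    trm (16) 0 1 1 0 1 0 2 1 +
    trm (4) 0 1 1 0 1 1 0 2 +
    trm (8) 0 2 0 0 1 0 3 0 +
    trm (12) 0 2 0 0 1 1 1 1 +
    trm (4) 0 2 0 1 0 1 2 0 +
    trm (1) 0 2 0 1 0 2 0 1 +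
    trm (2) 0 2 1 0 0 2 1 0 +
    trm (1) 0 3 0 0 0 3 0 0 +
    trm (-32) 1 0 0 0 2 0 1 2 +
    trm (-32) 1 0 0 1 1 0 2 1 +
    trm (-8) 1 0 0 1 1 1 0 2 +
    trm (-8) 1 0 0 2 0 0 3 0 +
    trm (-12) 1 0 0 2 0 1 1 1 +
    trm (-16) 1 0 1 1 0 1 2 0 +
    trm (-4) 1 0 1 1 0 2 0 1 +
    trm (-8) 1 0 2 0 0 2 1 0 +
    trm (32) 1 1 0 0 1 1 2 0 +
    trm (8) 1 1 0 0 1 2 0 1 +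
    trm (4) 1 1 0 1 0 2 1 0 +
    trm (-4) 1 1 1 0 0 3 0 0 +
    trm (32) 2 0 0 0 1 2 1 0 +
    trm (8) 2 0 0 1 0 3 0 0

open MvPolynomial in
noncomputable def Fpoly : MvPolynomial (Fin 3) (MvPolynomial (Fin 5) ℤ) :=
    trm (-3) 0 0 0 4 0 0 0 4 +
    trm (16) 0 0 1 2 1 0 0 4 +
    trm (-8) 0 0 1 3 0 0 1 3 +
    trm (64) 0 0 2 1 1 0 1 3 +
    trm (8) 0 0 2 2 0 0 2 2 +
    trm (64) 0 0 3 0 1 0 2 2 +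
    trm (32) 0 0 3 1 0 0 3 1 +
    trm (16) 0 0 4 0 0 0 4 0 +
    trm (-64) 0 1 0 1 2 0 0 4 +
    trm (-80) 0 1 0 2 1 0 1 3 +
    trm (-48) 0 1 0 3 0 0 2 2 +
    trm (-4) 0 1 0 3 0 1 0 3 +
    trm (-128) 0 1 1 0 2 0 1 3 +
    trm (-128) 0 1 1 1 1 0 2 2 +
    trm (32) 0 1 1 1 1 1 0 3 +
    trm (-128) 0 1 1 2 0 0 3 1 +
    trm (8) 0 1 1 2 0 1 1 2 +
    trm (64) 0 1 2 0 1 0 3 1 +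
    trm (64) 0 1 2 0 1 1 1 2 +
    trm (-64) 0 1 2 1 0 0 4 0 +
    trm (48) 0 1 2 1 0 1 2 1 +
    trm (32) 0 1 3 0 0 1 3 0 +
    trm (-192) 0 2 0 0 2 1 0 3 +
    trm (64) 0 2 0 1 1 0 3 1 +
    trm (-288) 0 2 0 1 1 1 1 2 +
    trm (-160) 0 2 0 2 0 1 2 1 +
    trm (14) 0 2 0 2 0 2 0 2 +
    trm (128) 0 2 1 0 1 0 4 0 +
    trm (-48) 0 2 1 0 1 2 0 2 +
    trm (-128) 0 2 1 1 0 1 3 0 +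
    trm (8) 0 2 1 1 0 2 1 1 +
    trm (8) 0 2 2 0 0 2 2 0 +
    trm (192) 0 3 0 0 1 1 3 0 +
    trm (-144) 0 3 0 0 1 2 1 1 +
    trm (-48) 0 3 0 1 0 2 2 0 +
    trm (-4) 0 3 0 1 0 3 0 1 +
    trm (-8) 0 3 1 0 0 3 1 0 +
    trm (-3) 0 4 0 0 0 4 0 0 +
    trm (256) 1 0 0 0 3 0 0 4 +
    trm (512) 1 0 0 1 2 0 1 3 +
    trm (480) 1 0 0 2 1 0 2 2 +
    trm (-128) 1 0 0 2 1 1 0 3 +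
    trm (192) 1 0 0 3 0 0 3 1 +
    trm (-144) 1 0 0 3 0 1 1 2 +
    trm (-256) 1 0 1 0 2 0 2 2 +
    trm (512) 1 0 1 0 2 1 0 3 +
    trm (-128) 1 0 1 1 1 0 3 1 +
    trm (640) 1 0 1 1 1 1 1 2 +
    trm (128) 1 0 1 2 0 0 4 0 +
    trm (-48) 1 0 1 2 0 2 0 2 +
    trm (-128) 1 0 2 0 1 0 4 0 +
    trm (256) 1 0 2 0 1 1 2 1 +
    trm (256) 1 0 2 0 1 2 0 2 +
    trm (64) 1 0 2 1 0 1 3 0 +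
    trm (64) 1 0 2 1 0 2 1 1 +
    trm (64) 1 0 3 0 0 2 2 0 +
    trm (-256) 1 1 0 0 2 0 3 1 +
    trm (-256) 1 1 0 1 1 0 4 0 +
    trm (320) 1 1 0 1 1 1 2 1 +
    trm (-256) 1 1 0 1 1 2 0 2 +
    trm (64) 1 1 0 2 0 1 3 0 +
    trm (-288) 1 1 0 2 0 2 1 1 +
    trm (-128) 1 1 1 0 1 1 3 0 +
    trm (640) 1 1 1 0 1 2 1 1 +
    trm (-128) 1 1 1 1 0 2 2 0 +
    trm (32) 1 1 1 1 0 3 0 1 +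
    trm (64) 1 1 2 0 0 3 1 0 +
    trm (480) 1 2 0 0 1 2 2 0 +
    trm (-128) 1 2 0 0 1 3 0 1 +
    trm (-80) 1 2 0 1 0 3 1 0 +
    trm (16) 1 2 1 0 0 4 0 0 +
    trm (256) 2 0 0 0 2 0 4 0 +
    trm (-1024) 2 0 0 0 2 1 2 1 +
    trm (512) 2 0 0 0 2 2 0 2 +
    trm (-256) 2 0 0 1 1 1 3 0 +
    trm (-192) 2 0 0 2 0 3 0 1 +
    trm (-256) 2 0 1 0 1 2 2 0 +
    trm (512) 2 0 1 0 1 3 0 1 +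
    trm (-128) 2 0 1 1 0 3 1 0 +
    trm (512) 2 1 0 0 1 3 1 0 +
    trm (-64) 2 1 0 1 0 4 0 0 +
    trm (256) 3 0 0 0 1 4 0 0

open MvPolynomial in
lemma trm_homog (n : ℤ) (i0 i1 i2 i3 i4 p q r m : ℕ) (hm : p + q + r = m) :
    (trm n i0 i1 i2 i3 i4 p q r).IsHomogeneous m := by
  have h1 := (isHomogeneous_C (Fin 3)
      ((C n * X 0 ^ i0 * X 1 ^ i1 * X 2 ^ i2 * X 3 ^ i3 * X 4 ^ i4 :
        MvPolynomial (Fin 5) ℤ))).mul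
    ((((isHomogeneous_X _ 0).pow p).mul
      ((isHomogeneous_X _ 1).pow q)).mul ((isHomogeneous_X _ 2).pow r))
  have h2 : 0 + (1 * p + 1 * q + 1 * r) = m := by omega
  rw [trm]
  exact h2 ▸ h1

theorem det_fin_four' {R : Type*} [CommRing R] (M : Matrix (Fin 4) (Fin 4) R) :
    M.det =
      M 0 0 * M 1 1 * M 2 2 * M 3 3 - M 0 0 * M 1 1 * M 2 3 * M 3 2 -
      M 0 0 * M 1 2 * M 2 1 * M 3 3 + M 0 0 * M 1 2 * M 2 3 * M 3 1 +
      M 0 0 * M 1 3 * M 2 1 * M 3 2 - M 0 0 * M 1 3 * M 2 2 * M 3 1 -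
      M 0 1 * M 1 0 * M 2 2 * M 3 3 + M 0 1 * M 1 0 * M 2 3 * M 3 2 +
      M 0 1 * M 1 2 * M 2 0 * M 3 3 - M 0 1 * M 1 2 * M 2 3 * M 3 0 -
      M 0 1 * M 1 3 * M 2 0 * M 3 2 + M 0 1 * M 1 3 * M 2 2 * M 3 0 +
      M 0 2 * M 1 0 * M 2 1 * M 3 3 - M 0 2 * M 1 0 * M 2 3 * M 3 1 -
      M 0 2 * M 1 1 * M 2 0 * M 3 3 + M 0 2 * M 1 1 * M 2 3 * M 3 0 +
      M 0 2 * M 1 3 * M 2 0 * M 3 1 - M 0 2 * M 1 3 * M 2 1 * M 3 0 -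
      M 0 3 * M 1 0 * M 2 1 * M 3 2 + M 0 3 * M 1 0 * M 2 2 * M 3 1 +
      M 0 3 * M 1 1 * M 2 0 * M 3 2 - M 0 3 * M 1 1 * M 2 2 * M 3 0 -
      M 0 3 * M 1 2 * M 2 0 * M 3 1 + M 0 3 * M 1 2 * M 2 1 * M 3 0 := by
  have h3 : (Fin.succ 2 : Fin 4) = 3 := rfl
  have h2 : (Fin.castSucc 2 : Fin 4) = 2 := rfl
  simp [Matrix.det_succ_row_zero, Fin.sum_univ_succ, Fin.succAbove, h3, h2]
  ring

/-- Evaluation of a polynomial in `ℤ[a,b,c,d,e][x,y,z]` at elements of a commutative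
ring `R`: the coefficient variables go to `a,b,c,d,e` and the main variables to `x,y,z`. -/
noncomputable def evalCovariant {R : Type*} [CommRing R]
    (P : MvPolynomial (Fin 3) (MvPolynomial (Fin 5) ℤ)) (a b c d e x y z : R) : R :=
  MvPolynomial.eval₂ (MvPolynomial.eval₂Hom (Int.castRingHom R) ![a, b, c, d, e]) ![x, y, z] P

theorem stmt_7 :
    ∃ H F : MvPolynomial (Fin 3) (MvPolynomial (Fin 5) ℤ),
      H.IsHomogeneous 3 ∧ F.IsHomogeneous 4 ∧
      ∀ (R : Type) (_ : CommRing R) (a b c d e u x y z : R),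
        256 * (quarticArithMatrix a b c d e u x y z).det =
          (4 * u - b * x - 2 * c * y - 3 * d * z) ^ 4 -
            2 * ((3 * b ^ 2 - 8 * a * c) * x ^ 2 + (4 * b * c - 24 * a * d) * x * y +
                  (4 * c ^ 2 - 8 * b * d - 16 * a * e) * y ^ 2 +
                  (2 * b * d - 32 * a * e) * x * z + (4 * c * d - 24 * b * e) * y * z +
                  (3 * d ^ 2 - 8 * c * e) * z ^ 2) *
              (4 * u - b * x - 2 * c * y - 3 * d * z) ^ 2 -
            8 * evalCovariant H a b c d e x y z * (4 * u - b * x - 2 * c * y - 3 * d * z) +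
            evalCovariant F a b c d e x y z := by
  classical
  have evAdd : ∀ (R : Type) (_ : CommRing R) (P Q : MvPolynomial (Fin 3) (MvPolynomial (Fin 5) ℤ))
      (a b c d e x y z : R), evalCovariant (P + Q) a b c d e x y z =
        evalCovariant P a b c d e x y z + evalCovariant Q a b c d e x y z := by
    intro R _ P Q a b c d e x y z
    simp [evalCovariant, MvPolynomial.eval₂_add]
  have evTrm : ∀ (R : Type) (_ : CommRing R) (n : ℤ) (i0 i1 i2 i3 i4 p q r : ℕ)
      (a b c d e x y z : R), evalCovariant (trm n i0 i1 i2 i3 i4 p q r) a b c d e x y z =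
        (n : R) * a ^ i0 * b ^ i1 * c ^ i2 * d ^ i3 * e ^ i4 * (x ^ p * y ^ q * z ^ r) := by
    intro R _ n i0 i1 i2 i3 i4 p q r a b c d e x y z
    simp only [trm, evalCovariant, MvPolynomial.eval₂_mul, MvPolynomial.eval₂_pow,
      MvPolynomial.eval₂_C, MvPolynomial.eval₂_X, map_mul, map_pow,
      MvPolynomial.eval₂Hom_X', MvPolynomial.eval₂Hom_C, Int.coe_castRingHom,
      Matrix.cons_val_zero, Matrix.cons_val_one, Matrix.head_cons,
      Matrix.cons_val_two, Matrix.tail_cons, Matrix.cons_val_three,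
      Matrix.cons_val_four, Matrix.cons_val_fin_one]
  refine ⟨Hpoly, Fpoly, ?_, ?_, ?_⟩
  · unfold Hpoly
    repeat' apply MvPolynomial.IsHomogeneous.add
    all_goals exact trm_homog _ _ _ _ _ _ _ _ _ _ (by norm_num)
  · unfold Fpoly
    repeat' apply MvPolynomial.IsHomogeneous.add
    all_goals exact trm_homog _ _ _ _ _ _ _ _ _ _ (by norm_num)
  · intro R _inst a b c d e u x y z
    have hH : evalCovariant Hpoly a b c d e x y z =
      -1 * d ^ 3 * x ^ 0 * y ^ 0 * z ^ 3 +
            4 * c ^ 1 * d ^ 1 * e ^ 1 * x ^ 0 * y ^ 0 * z ^ 3 +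
            -2 * c ^ 1 * d ^ 2 * x ^ 0 * y ^ 1 * z ^ 2 +
            8 * c ^ 2 * e ^ 1 * x ^ 0 * y ^ 1 * z ^ 2 +
            -8 * b ^ 1 * e ^ 2 * x ^ 0 * y ^ 0 * z ^ 3 +
            -4 * b ^ 1 * d ^ 1 * e ^ 1 * x ^ 0 * y ^ 1 * z ^ 2 +
            -4 * b ^ 1 * d ^ 2 * x ^ 0 * y ^ 2 * z ^ 1 +
            -1 * b ^ 1 * d ^ 2 * x ^ 1 * y ^ 0 * z ^ 2 +
            16 * b ^ 1 * c ^ 1 * e ^ 1 * x ^ 0 * y ^ 2 * z ^ 1 +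
            4 * b ^ 1 * c ^ 1 * e ^ 1 * x ^ 1 * y ^ 0 * z ^ 2 +
            8 * b ^ 2 * e ^ 1 * x ^ 0 * y ^ 3 * z ^ 0 +
            12 * b ^ 2 * e ^ 1 * x ^ 1 * y ^ 1 * z ^ 1 +
            4 * b ^ 2 * d ^ 1 * x ^ 1 * y ^ 2 * z ^ 0 +
            1 * b ^ 2 * d ^ 1 * x ^ 2 * y ^ 0 * z ^ 1 +
            2 * b ^ 2 * c ^ 1 * x ^ 2 * y ^ 1 * z ^ 0 +
            1 * b ^ 3 * x ^ 3 * y ^ 0 * z ^ 0 +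
            -32 * a ^ 1 * e ^ 2 * x ^ 0 * y ^ 1 * z ^ 2 +
            -32 * a ^ 1 * d ^ 1 * e ^ 1 * x ^ 0 * y ^ 2 * z ^ 1 +
            -8 * a ^ 1 * d ^ 1 * e ^ 1 * x ^ 1 * y ^ 0 * z ^ 2 +
            -8 * a ^ 1 * d ^ 2 * x ^ 0 * y ^ 3 * z ^ 0 +
            -12 * a ^ 1 * d ^ 2 * x ^ 1 * y ^ 1 * z ^ 1 +
            -16 * a ^ 1 * c ^ 1 * d ^ 1 * x ^ 1 * y ^ 2 * z ^ 0 +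
            -4 * a ^ 1 * c ^ 1 * d ^ 1 * x ^ 2 * y ^ 0 * z ^ 1 +
            -8 * a ^ 1 * c ^ 2 * x ^ 2 * y ^ 1 * z ^ 0 +
            32 * a ^ 1 * b ^ 1 * e ^ 1 * x ^ 1 * y ^ 2 * z ^ 0 +
            8 * a ^ 1 * b ^ 1 * e ^ 1 * x ^ 2 * y ^ 0 * z ^ 1 +
            4 * a ^ 1 * b ^ 1 * d ^ 1 * x ^ 2 * y ^ 1 * z ^ 0 +
            -4 * a ^ 1 * b ^ 1 * c ^ 1 * x ^ 3 * y ^ 0 * z ^ 0 +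
            32 * a ^ 2 * e ^ 1 * x ^ 2 * y ^ 1 * z ^ 0 +
            8 * a ^ 2 * d ^ 1 * x ^ 3 * y ^ 0 * z ^ 0 := by
      simp only [Hpoly, evAdd R _inst, evTrm R _inst]
      push_cast
      ring
    have hF : evalCovariant Fpoly a b c d e x y z =
      -3 * d ^ 4 * x ^ 0 * y ^ 0 * z ^ 4 +
            16 * c ^ 1 * d ^ 2 * e ^ 1 * x ^ 0 * y ^ 0 * z ^ 4 +
            -8 * c ^ 1 * d ^ 3 * x ^ 0 * y ^ 1 * z ^ 3 +
            64 * c ^ 2 * d ^ 1 * e ^ 1 * x ^ 0 * y ^ 1 * z ^ 3 +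
            8 * c ^ 2 * d ^ 2 * x ^ 0 * y ^ 2 * z ^ 2 +
            64 * c ^ 3 * e ^ 1 * x ^ 0 * y ^ 2 * z ^ 2 +
            32 * c ^ 3 * d ^ 1 * x ^ 0 * y ^ 3 * z ^ 1 +
            16 * c ^ 4 * x ^ 0 * y ^ 4 * z ^ 0 +
            -64 * b ^ 1 * d ^ 1 * e ^ 2 * x ^ 0 * y ^ 0 * z ^ 4 +
            -80 * b ^ 1 * d ^ 2 * e ^ 1 * x ^ 0 * y ^ 1 * z ^ 3 +
            -48 * b ^ 1 * d ^ 3 * x ^ 0 * y ^ 2 * z ^ 2 +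
            -4 * b ^ 1 * d ^ 3 * x ^ 1 * y ^ 0 * z ^ 3 +
            -128 * b ^ 1 * c ^ 1 * e ^ 2 * x ^ 0 * y ^ 1 * z ^ 3 +
            -128 * b ^ 1 * c ^ 1 * d ^ 1 * e ^ 1 * x ^ 0 * y ^ 2 * z ^ 2 +
            32 * b ^ 1 * c ^ 1 * d ^ 1 * e ^ 1 * x ^ 1 * y ^ 0 * z ^ 3 +
            -128 * b ^ 1 * c ^ 1 * d ^ 2 * x ^ 0 * y ^ 3 * z ^ 1 +
            8 * b ^ 1 * c ^ 1 * d ^ 2 * x ^ 1 * y ^ 1 * z ^ 2 +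
            64 * b ^ 1 * c ^ 2 * e ^ 1 * x ^ 0 * y ^ 3 * z ^ 1 +
            64 * b ^ 1 * c ^ 2 * e ^ 1 * x ^ 1 * y ^ 1 * z ^ 2 +
            -64 * b ^ 1 * c ^ 2 * d ^ 1 * x ^ 0 * y ^ 4 * z ^ 0 +
            48 * b ^ 1 * c ^ 2 * d ^ 1 * x ^ 1 * y ^ 2 * z ^ 1 +
            32 * b ^ 1 * c ^ 3 * x ^ 1 * y ^ 3 * z ^ 0 +
            -192 * b ^ 2 * e ^ 2 * x ^ 1 * y ^ 0 * z ^ 3 +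
            64 * b ^ 2 * d ^ 1 * e ^ 1 * x ^ 0 * y ^ 3 * z ^ 1 +
            -288 * b ^ 2 * d ^ 1 * e ^ 1 * x ^ 1 * y ^ 1 * z ^ 2 +
            -160 * b ^ 2 * d ^ 2 * x ^ 1 * y ^ 2 * z ^ 1 +
            14 * b ^ 2 * d ^ 2 * x ^ 2 * y ^ 0 * z ^ 2 +
            128 * b ^ 2 * c ^ 1 * e ^ 1 * x ^ 0 * y ^ 4 * z ^ 0 +
            -48 * b ^ 2 * c ^ 1 * e ^ 1 * x ^ 2 * y ^ 0 * z ^ 2 +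
            -128 * b ^ 2 * c ^ 1 * d ^ 1 * x ^ 1 * y ^ 3 * z ^ 0 +
            8 * b ^ 2 * c ^ 1 * d ^ 1 * x ^ 2 * y ^ 1 * z ^ 1 +
            8 * b ^ 2 * c ^ 2 * x ^ 2 * y ^ 2 * z ^ 0 +
            192 * b ^ 3 * e ^ 1 * x ^ 1 * y ^ 3 * z ^ 0 +
            -144 * b ^ 3 * e ^ 1 * x ^ 2 * y ^ 1 * z ^ 1 +
            -48 * b ^ 3 * d ^ 1 * x ^ 2 * y ^ 2 * z ^ 0 +
            -4 * b ^ 3 * d ^ 1 * x ^ 3 * y ^ 0 * z ^ 1 +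
            -8 * b ^ 3 * c ^ 1 * x ^ 3 * y ^ 1 * z ^ 0 +
            -3 * b ^ 4 * x ^ 4 * y ^ 0 * z ^ 0 +
            256 * a ^ 1 * e ^ 3 * x ^ 0 * y ^ 0 * z ^ 4 +
            512 * a ^ 1 * d ^ 1 * e ^ 2 * x ^ 0 * y ^ 1 * z ^ 3 +
            480 * a ^ 1 * d ^ 2 * e ^ 1 * x ^ 0 * y ^ 2 * z ^ 2 +
            -128 * a ^ 1 * d ^ 2 * e ^ 1 * x ^ 1 * y ^ 0 * z ^ 3 +
            192 * a ^ 1 * d ^ 3 * x ^ 0 * y ^ 3 * z ^ 1 +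
            -144 * a ^ 1 * d ^ 3 * x ^ 1 * y ^ 1 * z ^ 2 +
            -256 * a ^ 1 * c ^ 1 * e ^ 2 * x ^ 0 * y ^ 2 * z ^ 2 +
            512 * a ^ 1 * c ^ 1 * e ^ 2 * x ^ 1 * y ^ 0 * z ^ 3 +
            -128 * a ^ 1 * c ^ 1 * d ^ 1 * e ^ 1 * x ^ 0 * y ^ 3 * z ^ 1 +
            640 * a ^ 1 * c ^ 1 * d ^ 1 * e ^ 1 * x ^ 1 * y ^ 1 * z ^ 2 +
            128 * a ^ 1 * c ^ 1 * d ^ 2 * x ^ 0 * y ^ 4 * z ^ 0 +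
            -48 * a ^ 1 * c ^ 1 * d ^ 2 * x ^ 2 * y ^ 0 * z ^ 2 +
            -128 * a ^ 1 * c ^ 2 * e ^ 1 * x ^ 0 * y ^ 4 * z ^ 0 +
            256 * a ^ 1 * c ^ 2 * e ^ 1 * x ^ 1 * y ^ 2 * z ^ 1 +
            256 * a ^ 1 * c ^ 2 * e ^ 1 * x ^ 2 * y ^ 0 * z ^ 2 +
            64 * a ^ 1 * c ^ 2 * d ^ 1 * x ^ 1 * y ^ 3 * z ^ 0 +
            64 * a ^ 1 * c ^ 2 * d ^ 1 * x ^ 2 * y ^ 1 * z ^ 1 +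
            64 * a ^ 1 * c ^ 3 * x ^ 2 * y ^ 2 * z ^ 0 +
            -256 * a ^ 1 * b ^ 1 * e ^ 2 * x ^ 0 * y ^ 3 * z ^ 1 +
            -256 * a ^ 1 * b ^ 1 * d ^ 1 * e ^ 1 * x ^ 0 * y ^ 4 * z ^ 0 +
            320 * a ^ 1 * b ^ 1 * d ^ 1 * e ^ 1 * x ^ 1 * y ^ 2 * z ^ 1 +
            -256 * a ^ 1 * b ^ 1 * d ^ 1 * e ^ 1 * x ^ 2 * y ^ 0 * z ^ 2 +
            64 * a ^ 1 * b ^ 1 * d ^ 2 * x ^ 1 * y ^ 3 * z ^ 0 +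
            -288 * a ^ 1 * b ^ 1 * d ^ 2 * x ^ 2 * y ^ 1 * z ^ 1 +
            -128 * a ^ 1 * b ^ 1 * c ^ 1 * e ^ 1 * x ^ 1 * y ^ 3 * z ^ 0 +
            640 * a ^ 1 * b ^ 1 * c ^ 1 * e ^ 1 * x ^ 2 * y ^ 1 * z ^ 1 +
            -128 * a ^ 1 * b ^ 1 * c ^ 1 * d ^ 1 * x ^ 2 * y ^ 2 * z ^ 0 +
            32 * a ^ 1 * b ^ 1 * c ^ 1 * d ^ 1 * x ^ 3 * y ^ 0 * z ^ 1 +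
            64 * a ^ 1 * b ^ 1 * c ^ 2 * x ^ 3 * y ^ 1 * z ^ 0 +
            480 * a ^ 1 * b ^ 2 * e ^ 1 * x ^ 2 * y ^ 2 * z ^ 0 +
            -128 * a ^ 1 * b ^ 2 * e ^ 1 * x ^ 3 * y ^ 0 * z ^ 1 +
            -80 * a ^ 1 * b ^ 2 * d ^ 1 * x ^ 3 * y ^ 1 * z ^ 0 +
            16 * a ^ 1 * b ^ 2 * c ^ 1 * x ^ 4 * y ^ 0 * z ^ 0 +
            256 * a ^ 2 * e ^ 2 * x ^ 0 * y ^ 4 * z ^ 0 +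
            -1024 * a ^ 2 * e ^ 2 * x ^ 1 * y ^ 2 * z ^ 1 +
            512 * a ^ 2 * e ^ 2 * x ^ 2 * y ^ 0 * z ^ 2 +
            -256 * a ^ 2 * d ^ 1 * e ^ 1 * x ^ 1 * y ^ 3 * z ^ 0 +
            -192 * a ^ 2 * d ^ 2 * x ^ 3 * y ^ 0 * z ^ 1 +
            -256 * a ^ 2 * c ^ 1 * e ^ 1 * x ^ 2 * y ^ 2 * z ^ 0 +
            512 * a ^ 2 * c ^ 1 * e ^ 1 * x ^ 3 * y ^ 0 * z ^ 1 +
            -128 * a ^ 2 * c ^ 1 * d ^ 1 * x ^ 3 * y ^ 1 * z ^ 0 +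
            512 * a ^ 2 * b ^ 1 * e ^ 1 * x ^ 3 * y ^ 1 * z ^ 0 +
            -64 * a ^ 2 * b ^ 1 * d ^ 1 * x ^ 4 * y ^ 0 * z ^ 0 +
            256 * a ^ 3 * e ^ 1 * x ^ 4 * y ^ 0 * z ^ 0 := by
      simp only [Fpoly, evAdd R _inst, evTrm R _inst]
      push_cast
      ring
    rw [hH, hF]
    have hdet : (quarticArithMatrix a b c d e u x y z).det =
        u*(u-b*x-c*y-d*z)*(u-c*y-d*z)*(u-d*z)- u*(u-b*x-c*y-d*z)*(-(d*y)-e*z)*(a*x+b*y)- u*(-(c*x)-d*y-e*z)*(a*x)*(u-d*z)+ u*(-(c*x)-d*y-e*z)*(-(d*y)-e*z)*(a*y)+ u*(-(d*x)-e*y)*(a*x)*(a*x+b*y)- u*(-(d*x)-e*y)*(u-c*y-d*z)*(a*y)- (-(a*e*z))*x*(u-c*y-d*z)*(u-d*z)+ (-(a*e*z))*x*(-(d*y)-e*z)*(a*x+b*y)+ (-(a*e*z))*(-(c*x)-d*y-e*z)*y*(u-d*z)- (-(a*e*z))*(-(c*x)-d*y-e*z)*(-(d*y)-e*z)*z- (-(a*e*z))*(-(d*x)-e*y)*y*(a*x+b*y)+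 (-(a*e*z))*(-(d*x)-e*y)*(u-c*y-d*z)*z+ (-(e*(a*y+b*z)))*x*(a*x)*(u-d*z)- (-(e*(a*y+b*z)))*x*(-(d*y)-e*z)*(a*y)- (-(e*(a*y+b*z)))*(u-b*x-c*y-d*z)*y*(u-d*z)+ (-(e*(a*y+b*z)))*(u-b*x-c*y-d*z)*(-(d*y)-e*z)*z+ (-(e*(a*y+b*z)))*(-(d*x)-e*y)*y*(a*y)- (-(e*(a*y+b*z)))*(-(d*x)-e*y)*(a*x)*z- (-(e*(a*x+b*y+c*z)))*x*(a*x)*(a*x+b*y)+ (-(e*(a*x+b*y+c*z)))*x*(u-c*y-d*z)*(a*y)+ (-(e*(a*x+b*y+c*z)))*(u-b*x-c*y-d*z)*y*(a*x+b*y)- (-(e*(a*x+b*y+c*z)))*(u-b*x-c*y-d*z)*(u-c*y-d*z)*z- (-(e*(a*x+b*y+c*z)))*(-(c*x)-d*y-e*z)*y*(a*y)+ (-(e*(a*x+b*y+c*z)))*(-(c*x)-d*y-e*z)*(a*x)*z := by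
      rw [det_fin_four']
      norm_num [quarticArithMatrix, Matrix.cons_val_zero, Matrix.cons_val_one,
        Matrix.head_cons, Matrix.cons_val_two, Matrix.tail_cons, Matrix.cons_val_three]
    rw [hdet]
    ring
end

section
/- Let a,b,c,d,e be elements of a commutative ring, and set I = 12ae - 3bd + c², J = 72ace + 9bcd - 27ad² - 27b²e - 2c³. Let g₄ = G(x², x, 1), g₆ = H(x², x, 1), v = V(x,1), where V is the binary quartic (a,b,c,d,e), G is its quadratic covariant as above, and H its cubic covariant. Then the syzygy g₄³ - 48·g₄·I·v² - 64·J·v³ = 27·g₆² holds in R[x]. -/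
open Polynomial

theorem stmt_9 {R : Type*} [CommRing R] (a b c d e : R) :
    letI I : R := 12 * a * e - 3 * b * d + c ^ 2
    letI J : R := 72 * a * c * e + 9 * b * c * d - 27 * a * d ^ 2 - 27 * b ^ 2 * e - 2 * c ^ 3
    letI v : R[X] := C a * X ^ 4 + C b * X ^ 3 + C c * X ^ 2 + C d * X + C e
    -- g₄ = G(x², x, 1) where G is the quadratic covariant of the quartic (a,b,c,d,e)
    letI g₄ : R[X] :=
      C (3 * b ^ 2 - 8 * a * c) * (X ^ 2) ^ 2 + C (4 * b * c - 24 * a * d) * (X ^ 2) * X +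
        C (4 * c ^ 2 - 8 * b * d - 16 * a * e) * X ^ 2 + C (2 * b * d - 32 * a * e) * (X ^ 2) +
        C (4 * c * d - 24 * b * e) * X + C (3 * d ^ 2 - 8 * c * e)
    -- g₆ = H(x², x, 1) where H is the cubic covariant of the quartic (a,b,c,d,e)
    letI g₆ : R[X] :=
      C (b ^ 3 + 8 * a ^ 2 * d - 4 * a * b * c) * X ^ 6 +
        C (2 * (16 * a ^ 2 * e + 2 * a * b * d - 4 * a * c ^ 2 + b ^ 2 * c)) * X ^ 5 +
        C (5 * (8 * a * b * e + b ^ 2 * d - 4 * a * c * d)) * X ^ 4 +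
        C (20 * (b ^ 2 * e - a * d ^ 2)) * X ^ 3 -
        C (5 * (8 * a * d * e + b * d ^ 2 - 4 * b * c * e)) * X ^ 2 -
        C (2 * (16 * a * e ^ 2 + 2 * b * d * e - 4 * c ^ 2 * e + c * d ^ 2)) * X -
        C (d ^ 3 + 8 * b * e ^ 2 - 4 * c * d * e)
    g₄ ^ 3 - 48 * g₄ * C I * v ^ 2 - 64 * C J * v ^ 3 = 27 * g₆ ^ 2 := by
  set_option maxHeartbeats 2000000 in
  simp only [map_mul, map_add, map_sub, map_pow, map_ofNat]
  set_option maxHeartbeats 4000000 in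
  ring
end

section
/- Let p₂₁, p₂₂, p₂₃, p₃₁, p₃₂, p₃₃ be elements of a commutative ring such that p₂₂p₃₃ - p₂₃p₃₂ = p₂₃p₃₁ - p₂₁p₃₃ = p₂₁p₃₂ - p₂₂p₃₁ = g for some element g. Define A₁ = p₃₁p₃₂p₃₃, A₂ = -(p₂₃p₃₁p₃₂ + p₂₁p₃₂p₃₃ + p₂₂p₃₁p₃₃), A₃ = p₂₂p₂₃p₃₁ + p₂₁p₂₃p₃₂ + p₂₁p₂₂p₃₃, A₄ = -p₂₁p₂₂p₂₃. Then the discriminant of the binary cubic form (A₁, A₂, A₃, A₄), namely A₂²A₃² - 4A₁A₃³ - 4A₂³A₄ + 18A₁A₂A₃A₄ - 27A₁²A₄², equals g⁶. -/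
theorem stmt_16 {R : Type*} [CommRing R]
    (p₂₁ p₂₂ p₂₃ p₃₁ p₃₂ p₃₃ g : R)
    (h1 : p₂₂ * p₃₃ - p₂₃ * p₃₂ = g)
    (h2 : p₂₃ * p₃₁ - p₂₁ * p₃₃ = g)
    (h3 : p₂₁ * p₃₂ - p₂₂ * p₃₁ = g)
    (A₁ A₂ A₃ A₄ : R)
    (hA₁ : A₁ = p₃₁ * p₃₂ * p₃₃)
    (hA₂ : A₂ = -(p₂₃ * p₃₁ * p₃₂ + p₂₁ * p₃₂ * p₃₃ + p₂₂ * p₃₁ * p₃₃))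
    (hA₃ : A₃ = p₂₂ * p₂₃ * p₃₁ + p₂₁ * p₂₃ * p₃₂ + p₂₁ * p₂₂ * p₃₃)
    (hA₄ : A₄ = -(p₂₁ * p₂₂ * p₂₃)) :
    A₂ ^ 2 * A₃ ^ 2 - 4 * A₁ * A₃ ^ 3 - 4 * A₂ ^ 3 * A₄ + 18 * A₁ * A₂ * A₃ * A₄ -
      27 * A₁ ^ 2 * A₄ ^ 2 = g ^ 6 := by
  subst hA₁ hA₂ hA₃ hA₄
  have key : (p₂₂ * p₃₃ - p₂₃ * p₃₂) ^ 2 * (p₂₃ * p₃₁ - p₂₁ * p₃₃) ^ 2 *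
      (p₂₁ * p₃₂ - p₂₂ * p₃₁) ^ 2 = g ^ 6 := by
    rw [h1, h2, h3]; ring
  rw [← key]; ring
end

section
/- Let R be a commutative ring and a,b,c,d,e,f ∈ R. For u,x,y,z,w ∈ R define the 5×5 matrix N(u,x,y,z,w) with rows: [u, -afw, -f(bw+az), -f(cw+ay+bz), -f(dw+ax+by+cz)]; [x, u-ew-bx-cy-dz, -fw-cx-dy-ez, -dx-ey-fz, -ex-fy]; [y, ax, u-ew-cy-dz, -fw-dy-ez, -ey-fz]; [z, ay, ax+by, u-ew-dz, -fw-ez]; [w, az, ay+bz, ax+by+cz, u-ew]. Then any two such matrices commute: N(u₁,x₁,y₁,z₁,w₁)·N(u₂,x₂,y₂,z₂,w₂) = N(u₂,x₂,y₂,z₂,w₂)·N(u₁,x₁,y₁,z₁,w₁). -/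
/-- The 5×5 arithmetic matrix attached to the binary quintic form `(a, b, c, d, e, f)`. -/
def quinticArithMatrix {R : Type*} [CommRing R] (a b c d e f u x y z w : R) :
    Matrix (Fin 5) (Fin 5) R :=
  !![u, -a * f * w, -f * (b * w + a * z), -f * (c * w + a * y + b * z),
       -f * (d * w + a * x + b * y + c * z);
     x, u - e * w - b * x - c * y - d * z, -f * w - c * x - d * y - e * z,
       -d * x - e * y - f * z, -e * x - f * y;
     y, a * x, u - e * w - c * y - d * z, -f * w - d * y - e * z, -e * y - f * z;
     z, a * y, a * x + b * y, u - e * w - d * z, -f * w - e * z;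
     w, a * z, a * y + b * z, a * x + b * y + c * z, u - e * w]

set_option maxHeartbeats 4000000 in
theorem stmt_17 {R : Type*} [CommRing R] (a b c d e f : R)
    (u₁ x₁ y₁ z₁ w₁ u₂ x₂ y₂ z₂ w₂ : R) :
    quinticArithMatrix a b c d e f u₁ x₁ y₁ z₁ w₁ *
        quinticArithMatrix a b c d e f u₂ x₂ y₂ z₂ w₂ =
      quinticArithMatrix a b c d e f u₂ x₂ y₂ z₂ w₂ *
        quinticArithMatrix a b c d e f u₁ x₁ y₁ z₁ w₁ := by
  ext i j
  fin_cases i <;> fin_cases j <;>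
    simp [quinticArithMatrix, Matrix.mul_apply, Fin.sum_univ_five] <;> ring
end

section
/- Let m be an even positive integer and A, B be m×m matrices over a commutative ring in which 2 is invertible. For 1 ≤ i,j ≤ m define X_{i,j} = Σ_{k=1}^{m/2} (a_{i,2k-1} + b_{2k,j})(a_{i,2k} + b_{2k-1,j}) and Z_{i,j} = Σ_{k=1}^{m/2} (a_{i,2k-1} - b_{2k,j})(a_{i,2k} - b_{2k-1,j}). Then X_{i,j} - Z_{i,j} = 2·Σ_{k=1}^{m/2} (a_{i,2k-1}b_{2k-1,j} + a_{i,2k}b_{2k,j}) = 2·(AB)_{i,j}, i.e. (AB)_{i,j} = (X_{i,j} - Z_{i,j})/2. -/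
lemma aux_pair_sum {R : Type*} [CommRing R] (p : ℕ) (f : ℕ → R) :
    ∑ k ∈ Finset.range p, (f (2 * k) + f (2 * k + 1)) = ∑ k ∈ Finset.range (2 * p), f k := by
  induction p with
  | zero => simp
  | succ n ih =>
      have h2 : 2 * (n + 1) = (2 * n + 1) + 1 := by ring
      rw [Finset.sum_range_succ, ih, h2, Finset.sum_range_succ, Finset.sum_range_succ]
      ring

theorem stmt_18 {R : Type*} [CommRing R] [Invertible (2 : R)] (p : ℕ)
    (A B : Matrix (Fin (2 * p)) (Fin (2 * p)) R) (i j : Fin (2 * p)) :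
    letI X : R := ∑ k : Fin p,
      (A i ⟨2 * k.1, by have := k.2; omega⟩ + B ⟨2 * k.1 + 1, by have := k.2; omega⟩ j) *
        (A i ⟨2 * k.1 + 1, by have := k.2; omega⟩ + B ⟨2 * k.1, by have := k.2; omega⟩ j)
    letI Z : R := ∑ k : Fin p,
      (A i ⟨2 * k.1, by have := k.2; omega⟩ - B ⟨2 * k.1 + 1, by have := k.2; omega⟩ j) *
        (A i ⟨2 * k.1 + 1, by have := k.2; omega⟩ - B ⟨2 * k.1, by have := k.2; omega⟩ j)
    X - Z = 2 * (A * B) i j ∧ (A * B) i j = ⅟(2 : R) * (X - Z) := by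
  set H : ℕ → R := fun n => if h : n < 2 * p then A i ⟨n, h⟩ * B ⟨n, h⟩ j else 0 with hH
  have hXZ : (∑ k : Fin p,
      (A i ⟨2 * k.1, by have := k.2; omega⟩ + B ⟨2 * k.1 + 1, by have := k.2; omega⟩ j) *
        (A i ⟨2 * k.1 + 1, by have := k.2; omega⟩ + B ⟨2 * k.1, by have := k.2; omega⟩ j)) -
      (∑ k : Fin p,
      (A i ⟨2 * k.1, by have := k.2; omega⟩ - B ⟨2 * k.1 + 1, by have := k.2; omega⟩ j) *
        (A i ⟨2 * k.1 + 1, by have := k.2; omega⟩ - B ⟨2 * k.1, by have := k.2; omega⟩ j)) =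
      2 * (A * B) i j := by
    have hmul : (A * B) i j = ∑ k ∈ Finset.range (2 * p), H k := by
      rw [Matrix.mul_apply, ← Fin.sum_univ_eq_sum_range H]
      refine Finset.sum_congr rfl fun k _ => ?_
      simp only [hH]
      rw [dif_pos k.2]
    rw [hmul, ← aux_pair_sum, Finset.mul_sum, ← Finset.sum_sub_distrib,
      ← Fin.sum_univ_eq_sum_range (fun k => 2 * (H (2 * k) + H (2 * k + 1))) p]
    refine Finset.sum_congr rfl fun k _ => ?_
    have hk' : k.1 < p := k.2
    simp only [hH]
    rw [dif_pos (by omega : 2 * k.1 < 2 * p), dif_pos (by omega : 2 * k.1 + 1 < 2 * p)]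
    ring
  refine ⟨hXZ, ?_⟩
  rw [hXZ, ← mul_assoc, invOf_mul_self, one_mul]
end

section
/- Let a,b,c,d be elements of a commutative ring, let C(x,y) = ax³+bx²y+cxy²+dy³ be a binary cubic form, let Q(x,y) be its Hessian covariant Q = (b²-3ac)x² + (bc-9ad)xy + (c²-3bd)y², let F(x,y) be its Jacobian covariant (the Jacobian of C and Q), and let Δ = 18abcd + b²c² - 27a²d² - 4ac³ - 4b³d be the discriminant of C. Then Cayley's syzygy holds: F(x,y)² + 27·Δ·C(x,y)² = 4·Q(x,y)³. -/
theorem stmt_19 {R : Type*} [CommRing R] (a b c d x y : R) :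
    letI Cxy : R := a * x ^ 3 + b * x ^ 2 * y + c * x * y ^ 2 + d * y ^ 3
    letI Q : R := (b ^ 2 - 3 * a * c) * x ^ 2 + (b * c - 9 * a * d) * x * y +
      (c ^ 2 - 3 * b * d) * y ^ 2
    letI F : R := (-27 * a ^ 2 * d + 9 * a * b * c - 2 * b ^ 3) * x ^ 3 +
      (-3 * b ^ 2 * c - 27 * a * b * d + 18 * a * c ^ 2) * x ^ 2 * y +
      (3 * b * c ^ 2 + 27 * a * c * d - 18 * b ^ 2 * d) * x * y ^ 2 +
      (27 * a * d ^ 2 - 9 * b * c * d + 2 * c ^ 3) * y ^ 3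
    letI Δ : R := 18 * a * b * c * d + b ^ 2 * c ^ 2 - 27 * a ^ 2 * d ^ 2 -
      4 * a * c ^ 3 - 4 * b ^ 3 * d
    F ^ 2 + 27 * Δ * Cxy ^ 2 = 4 * Q ^ 3 := by
  ring
end
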